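/- arXiv:math/9808074 — 2 statements merged into one kernel-verified Lean document; each statement's English description precedes it below -/
import Mathlib

section
/- Let k be a field of characteristic 2, λ ∈ k with λ ≠ 0 and λ ≠ 1, s ∈ k with s² = λ, and t ∈ k with t² = 1 + λ + s. Then one has the polynomial identity F(X + s, Y + λ + s) = X³ + (Y + tX)², where F(X,Y) = Y² − X(X−1)(X−λ). In particular the homogeneous quadratic part of F at its singular point (s, λ+s) is the square of a linear form (a double line), so the singular point is not a node. -/
open MvPolynomial

/-- The affine Legendre polynomial `F(X, Y) = Y² − X(X−1)(X−λ)`, as a polynomial in the two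
variables `X = X 0` and `Y = X 1` over `k`. -/
noncomputable def legendrePoly (k : Type*) [CommRing k] (lam : k) : MvPolynomial (Fin 2) k :=
  X 1 ^ 2 - X 0 * (X 0 - 1) * (X 0 - C lam)

/-- After substituting `λ = s²` and using `ht` on the `X²`-coefficient, the difference of the two
sides is `2` times an integer polynomial. -/
theorem CharTwo.legendre_shift_eq_cube_add_sq {R : Type*} [CommRing R] [CharP R 2]
    {lam s t x y : R} (hs : s ^ 2 = lam) (ht : t ^ 2 = 1 + lam + s) :
    (y + (lam + s)) ^ 2 - (x + s) * (x + s - 1) * (x + s - lam) = x ^ 3 + (y + t * x) ^ 2 := by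
  subst hs
  linear_combination (-x ^ 2) * ht + (y * (s ^ 2 + s) + s ^ 4 + s ^ 2 - x ^ 3 - 2 * s * x ^ 2
    - (2 * s ^ 2 - s - s ^ 3) * x - t * x * y) * CharTwo.two_eq_zero (R := R)

theorem legendre_at_singular_point_char_two_general {k : Type*} [Field k] [CharP k 2] (lam s t : k)
    (hs : s ^ 2 = lam) (ht : t ^ 2 = 1 + lam + s) :
    bind₁ ![X 0 + C s, X 1 + C (lam + s)] (legendrePoly k lam) =
      X 0 ^ 3 + (X 1 + C t * X 0) ^ 2 := by
  simp only [legendrePoly, map_sub, map_mul, map_pow, map_one, map_add, bind₁_X_right,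
    bind₁_C_right, Matrix.cons_val_zero, Matrix.cons_val_one]
  refine CharTwo.legendre_shift_eq_cube_add_sq ?_ ?_
  · rw [← map_pow, hs]
  · rw [← map_pow, ht, map_add, map_add, map_one]

/-- Over a field `k` of characteristic 2, with `λ ≠ 0, 1`, `s² = λ` and `t² = 1 + λ + s`, one has
the polynomial identity `F(X + s, Y + λ + s) = X³ + (Y + tX)²` for the Legendre polynomial
`F(X,Y) = Y² − X(X−1)(X−λ)`.  In particular the quadratic part of `F` at its singular point
`(s, λ + s)` is the square of a linear form, so the singular point is not a node. -/
theorem legendre_at_singular_point_char_two {k : Type*} [Field k] [CharP k 2] (lam s t : k)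
    (hlam0 : lam ≠ 0) (hlam1 : lam ≠ 1) (hs : s ^ 2 = lam) (ht : t ^ 2 = 1 + lam + s) :
    bind₁ ![X 0 + C s, X 1 + C (lam + s)] (legendrePoly k lam) =
      X 0 ^ 3 + (X 1 + C t * X 0) ^ 2 :=
  legendre_at_singular_point_char_two_general lam s t hs ht
end

section
/- Let F be an algebraically closed field of characteristic 2 and let W be an elliptic curve over F given by a Weierstrass equation with Δ ≠ 0. Then the j-invariant of W is 0 if and only if the only point P of W with P + P = 0 is the point at infinity; that is, W is supersingular (its group of points has trivial 2-torsion) precisely when j = 0. -/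
/-!
In characteristic 2 we have `j = a₁¹² / Δ`, so `j = 0` iff `a₁ = 0`. An affine point `(x, y)` is
2-torsion iff `y` equals its negative `-y - a₁x - a₃`, which in characteristic 2 means
`a₁x + a₃ = 0`. If `a₁ = 0` then `Δ = a₃⁴` is a unit, so no affine point is 2-torsion. If
`a₁ ≠ 0`, take `x = a₃ / a₁`; the Weierstrass equation is monic quadratic in `y`, so over an
algebraically closed field it has a solution, which is nonsingular since `Δ ≠ 0`.
-/

open Polynomial WeierstrassCurve.Affine

namespace WeierstrassCurve

lemma isUnit_a₃_of_a₁_eq_zero_of_char_two {R : Type*} [CommRing R] [CharP R 2]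
    (W : WeierstrassCurve R) [W.IsElliptic] (ha₁ : W.a₁ = 0) : IsUnit W.a₃ := by
  have hΔ : W.Δ = W.a₃ ^ 4 := by rw [Δ_of_char_two, ha₁]; ring
  exact (isUnit_pow_iff four_ne_zero).mp (hΔ ▸ W.isUnit_Δ)

namespace Affine

lemma negY_eq_self_iff_of_char_two {R : Type*} [CommRing R] [CharP R 2] (W : Affine R)
    (x y : R) : W.negY x y = y ↔ W.a₁ * x + W.a₃ = 0 := by
  have h2 : (2 : R) = 0 := CharTwo.two_eq_zero
  rw [negY, ← sub_eq_zero]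
  constructor <;> intro h <;> linear_combination -h - y * h2

lemma exists_equation_of_isAlgClosed {F : Type*} [Field F] [IsAlgClosed F] (W : Affine F)
    (x : F) : ∃ y, W.Equation x y := by
  obtain ⟨y, hy⟩ := IsAlgClosed.exists_root (W.polynomial.map (evalRingHom x)) <| by
    rw [W.monic_polynomial.degree_map, degree_polynomial]; decide
  exact ⟨y, by rwa [IsRoot, map_evalRingHom_eval] at hy⟩

namespace Point

lemma some_add_self_eq_zero_iff {F : Type*} [Field F] [DecidableEq F] {W : Affine F} {x y : F}
    (h : W.Nonsingular x y) : some x y h + some x y h = 0 ↔ y = W.negY x y :=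
  ⟨fun h2 => by_contra fun hy => some_ne_zero _ (add_self_of_Y_ne hy ▸ h2), add_self_of_Y_eq⟩

lemma some_add_self_eq_zero_iff_of_char_two {F : Type*} [Field F] [CharP F 2] [DecidableEq F]
    {W : Affine F} {x y : F} (h : W.Nonsingular x y) :
    some x y h + some x y h = 0 ↔ W.a₁ * x + W.a₃ = 0 :=
  (some_add_self_eq_zero_iff h).trans <| eq_comm.trans <| W.negY_eq_self_iff_of_char_two x y

end Point
end Affine
end WeierstrassCurve

open Classical in
/-- Let `F` be an algebraically closed field of characteristic 2 and let `W` be an elliptic curve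
over `F` (a Weierstrass curve with invertible discriminant).  Then the j-invariant of `W` is `0`
if and only if the only point `P` of `W` with `P + P = 0` is the point at infinity, i.e. `W` is
supersingular (trivial 2-torsion) precisely when `j = 0`. -/
theorem j_eq_zero_iff_two_torsion_trivial_char_two {F : Type*} [Field F] [IsAlgClosed F]
    [CharP F 2] (W : WeierstrassCurve F) [W.IsElliptic] :
    W.j = 0 ↔ ∀ P : W.toAffine.Point, P + P = 0 → P = 0 := by
  rw [W.j_eq_zero_iff_of_char_two]
  constructor
  · rintro ha₁ (_ | ⟨h⟩) hP
    · rfl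
    · rw [Point.some_add_self_eq_zero_iff_of_char_two, ha₁, zero_mul, zero_add] at hP
      exact absurd hP (W.isUnit_a₃_of_a₁_eq_zero_of_char_two ha₁).ne_zero
  · intro hT
    by_contra ha₁
    obtain ⟨y, hy⟩ := W.toAffine.exists_equation_of_isAlgClosed (W.a₃ / W.a₁)
    have h := equation_iff_nonsingular.mp hy
    refine Point.some_ne_zero h <| hT _ <| (Point.some_add_self_eq_zero_iff_of_char_two h).mpr ?_
    rw [mul_div_cancel₀ _ ha₁, CharTwo.add_self_eq_zero]
end
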